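/- arXiv:2402.04899 — 6 statements merged into one kernel-verified Lean document; each statement's English description precedes it below -/
import Mathlib

section
/- For the staged progression epidemic system with initial condition S(0) > 0, I(0) ≥ 0, I(0) ≠ 0, and for any t₀ ≥ 0 and j ∈ {1,…,n}, the series ∑_{t≥t₀} Iⱼ(t) converges and equals (1/γⱼ)(S(t₀) − S∞ + ∑_{i=1}^{j} Iᵢ(t₀)), where S∞ = lim S(t). -/
open Filter Topology

/-- The set of admissible infected-population vectors when the total population is `N`. -/
def stateSet (n : ℕ) (N : ℝ) : Set (Fin n → ℝ) :=
  {I | (∀ j, 0 ≤ I j) ∧ ∑ j, I j ≤ N}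

/-- Hypothesis (H) on the incidence function `φ`: it is C², vanishes at `0`, takes values
in `[0,1)` on the admissible set, has nonnegative gradient there, its partial derivative
with respect to the last class at `0` is positive, and it is concave (down). -/
def HypH (n : ℕ) (N : ℝ) (φ : (Fin n → ℝ) → ℝ) : Prop :=
  ContDiff ℝ 2 φ ∧ φ 0 = 0 ∧
  (∀ I ∈ stateSet n N, 0 ≤ φ I ∧ φ I < 1) ∧
  (∀ I ∈ stateSet n N, ∀ j, 0 ≤ fderiv ℝ φ I (Pi.single j 1)) ∧
  (∀ h : 0 < n, 0 < fderiv ℝ φ 0 (Pi.single (⟨n - 1, Nat.sub_lt h Nat.one_pos⟩ : Fin n) 1)) ∧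
  ConcaveOn ℝ (stateSet n N) φ

/-- The discrete-time staged progression epidemic system:
`S(t+1) = (1−φ(I(t)))S(t)`, `I₁(t+1) = (1−γ₁)I₁(t) + φ(I(t))S(t)`,
`Iⱼ(t+1) = (1−γⱼ)Iⱼ(t) + γⱼ₋₁Iⱼ₋₁(t)` for `2 ≤ j ≤ n`. -/
def SPSystem {n : ℕ} (γ : Fin n → ℝ) (φ : (Fin n → ℝ) → ℝ)
    (S : ℕ → ℝ) (I : ℕ → Fin n → ℝ) : Prop :=
  (∀ t, S (t + 1) = (1 - φ (I t)) * S t) ∧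
  (∀ t, ∀ h0 : 0 < n, I (t + 1) ⟨0, h0⟩ = (1 - γ ⟨0, h0⟩) * I t ⟨0, h0⟩ + φ (I t) * S t) ∧
  (∀ t, ∀ j : Fin n, ∀ h : j.val + 1 < n,
    I (t + 1) ⟨j.val + 1, h⟩ = (1 - γ ⟨j.val + 1, h⟩) * I t ⟨j.val + 1, h⟩ + γ j * I t j)

/-- Admissible initial condition: `S(0) > 0`, `I(0) ≥ 0`, `I(0) ≠ 0`, `S(0)+‖I(0)‖₁ ≤ N`. -/
def AdmissibleIC {n : ℕ} (N : ℝ) (S : ℕ → ℝ) (I : ℕ → Fin n → ℝ) : Prop :=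
  0 < S 0 ∧ (∀ j, 0 ≤ I 0 j) ∧ I 0 ≠ 0 ∧ S 0 + ∑ j, I 0 j ≤ N

/-!
Along a trajectory the quantity `Vⱼ(t) = S(t) + ∑_{i ≤ j} Iᵢ(t)` loses exactly the outflow
`γⱼ Iⱼ(t)` of class `j` at each step, since all other transfers stay inside the first `j`
classes. Summing telescopes: `γⱼ ∑_{t ≥ t₀} Iⱼ(t) = Vⱼ(t₀) − lim Vⱼ = Vⱼ(t₀) − S∞`. The series
converges unconditionally because the trajectory stays nonnegative.
-/

theorem hasSum_sub_succ_of_antitone {V : ℕ → ℝ} {L : ℝ} (hV : Antitone V)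
    (hL : Tendsto V atTop (𝓝 L)) : HasSum (fun t => V t - V (t + 1)) (V 0 - L) := by
  rw [hasSum_iff_tendsto_nat_of_nonneg fun t => sub_nonneg.2 (hV t.le_succ)]
  simpa only [Finset.sum_range_sub'] using tendsto_const_nhds.sub hL

theorem Fin.Iic_mk_succ {n k : ℕ} (h : k + 1 < n) :
    Finset.Iic (⟨k + 1, h⟩ : Fin n) = insert ⟨k + 1, h⟩ (Finset.Iic ⟨k, by omega⟩) := by
  ext i
  simp only [Finset.mem_Iic, Finset.mem_insert, Fin.le_def, Fin.ext_iff]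
  omega

namespace SPSystem

variable {n : ℕ} {γ : Fin n → ℝ} {φ : (Fin n → ℝ) → ℝ} {S : ℕ → ℝ} {I : ℕ → Fin n → ℝ}

theorem add_sum_Iic_succ (hsys : SPSystem γ φ S I) (t : ℕ) (j : Fin n) :
    S (t + 1) + ∑ i ∈ Finset.Iic j, I (t + 1) i
      = S t + ∑ i ∈ Finset.Iic j, I t i - γ j * I t j := by
  obtain ⟨eqS, eqI0, eqI⟩ := hsys
  obtain ⟨k, hk⟩ := j
  induction k with
  | zero =>
    have hIic : Finset.Iic (⟨0, hk⟩ : Fin n) = {⟨0, hk⟩} := by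
      ext i
      simp [Fin.le_def, Fin.ext_iff]
    rw [hIic, Finset.sum_singleton, Finset.sum_singleton, eqS, eqI0]
    ring
  | succ k ih =>
    have hnotMem : (⟨k + 1, hk⟩ : Fin n) ∉ Finset.Iic ⟨k, by omega⟩ := by
      simp [Fin.le_def]
    rw [Fin.Iic_mk_succ, Finset.sum_insert hnotMem, Finset.sum_insert hnotMem,
      eqI t ⟨k, by omega⟩ hk]
    linarith [ih (by omega)]

theorem add_sum_succ_le [NeZero n] (hsys : SPSystem γ φ S I) (hγ : ∀ j, 0 ≤ γ j) (t : ℕ)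
    (hI : ∀ j, 0 ≤ I t j) : S (t + 1) + ∑ j, I (t + 1) j ≤ S t + ∑ j, I t j := by
  have h := hsys.add_sum_Iic_succ t ⊤
  rw [Finset.Iic_top] at h
  nlinarith [hγ ⊤, hI ⊤]

theorem nonneg_succ (hsys : SPSystem γ φ S I) (hγ : ∀ j, γ j ∈ Set.Icc 0 1) (t : ℕ)
    (hφ : 0 ≤ φ (I t)) (hS : 0 ≤ S t) (hI : ∀ j, 0 ≤ I t j) : ∀ j, 0 ≤ I (t + 1) j := by
  obtain ⟨-, eqI0, eqI⟩ := hsys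
  have hγ' : ∀ j, 0 ≤ 1 - γ j := fun j => sub_nonneg.2 (hγ j).2
  rintro ⟨_ | k, hk⟩
  · rw [eqI0]
    exact add_nonneg (mul_nonneg (hγ' _) (hI _)) (mul_nonneg hφ hS)
  · rw [eqI t ⟨k, by omega⟩ hk]
    exact add_nonneg (mul_nonneg (hγ' _) (hI _)) (mul_nonneg (hγ _).1 (hI _))

theorem nonneg_and_total_le {N : ℝ} [NeZero n] (hsys : SPSystem γ φ S I) (hγ : ∀ j, γ j ∈ Set.Icc 0 1)
    (hφ : ∀ x ∈ stateSet n N, φ x ∈ Set.Icc 0 1)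
    (hS0 : 0 ≤ S 0) (hI0 : ∀ j, 0 ≤ I 0 j) (htot0 : S 0 + ∑ j, I 0 j ≤ N) (t : ℕ) :
    0 ≤ S t ∧ (∀ j, 0 ≤ I t j) ∧ S t + ∑ j, I t j ≤ N := by
  induction t with
  | zero => exact ⟨hS0, hI0, htot0⟩
  | succ t ih =>
    obtain ⟨hS, hI, htot⟩ := ih
    obtain ⟨hφ0, hφ1⟩ := hφ (I t) ⟨hI, by linarith⟩
    refine ⟨?_, hsys.nonneg_succ hγ t hφ0 hS hI, ?_⟩
    · rw [hsys.1]
      exact mul_nonneg (sub_nonneg.2 hφ1) hS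
    · linarith [hsys.add_sum_succ_le (fun j => (hγ j).1) t hI]

end SPSystem

theorem sp_series_formula_general
    (n : ℕ) (hn : 0 < n) (N : ℝ)
    (γ : Fin n → ℝ) (hγ : ∀ j, γ j ∈ Set.Ioo (0 : ℝ) 1)
    (φ : (Fin n → ℝ) → ℝ) (hφ : HypH n N φ)
    (S : ℕ → ℝ) (I : ℕ → Fin n → ℝ)
    (hsys : SPSystem γ φ S I) (hic : AdmissibleIC N S I)
    (Sinf : ℝ) (hSinf : Filter.Tendsto S Filter.atTop (nhds Sinf))
    (hIlim : ∀ j : Fin n, Filter.Tendsto (fun t => I t j) Filter.atTop (nhds 0)) :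
    ∀ (t₀ : ℕ) (j : Fin n),
      HasSum (fun t : ℕ => I (t₀ + t) j)
        ((1 / γ j) * (S t₀ - Sinf + ∑ i ∈ Finset.Iic j, I t₀ i)) := by
  intro t₀ j
  have : NeZero n := ⟨hn.ne'⟩
  obtain ⟨hS0, hI0, -, htot0⟩ := hic
  obtain ⟨-, -, hφrange, -⟩ := hφ
  have hI := fun t => (hsys.nonneg_and_total_le (fun i => Set.Ioo_subset_Icc_self (hγ i))
    (fun x hx => ⟨(hφrange x hx).1, (hφrange x hx).2.le⟩) hS0.le hI0 htot0 t).2.1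
  set V : ℕ → ℝ := fun t => S (t₀ + t) + ∑ i ∈ Finset.Iic j, I (t₀ + t) i
  have hdrop : ∀ t, V t - V (t + 1) = γ j * I (t₀ + t) j := fun t => by
    simp only [V, ← add_assoc, hsys.add_sum_Iic_succ]
    ring
  have hV : Antitone V := antitone_nat_of_succ_le fun t => by
    linarith [hdrop t, mul_nonneg (hγ j).1.le (hI (t₀ + t) j)]
  have hlim : Tendsto V atTop (𝓝 Sinf) := by
    have h := hSinf.add (tendsto_finsetSum (Finset.Iic j) fun i _ => hIlim i)
    rw [Finset.sum_const_zero, add_zero] at h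
    exact h.comp (tendsto_atTop_mono (Nat.le_add_left · t₀) tendsto_id)
  have hsum := hasSum_sub_succ_of_antitone hV hlim
  simp only [hdrop] at hsum
  have hval : γ j * (1 / γ j * (S t₀ - Sinf + ∑ i ∈ Finset.Iic j, I t₀ i)) =
      S t₀ + ∑ i ∈ Finset.Iic j, I t₀ i - Sinf := by
    rw [one_div, mul_inv_cancel_left₀ (hγ j).1.ne']
    ring
  rwa [← hasSum_mul_left_iff (hγ j).1.ne', hval]

/-- for any `t₀` and any class `j`, the series `∑_{t ≥ t₀} Iⱼ(t)` converges
and equals `(1/γⱼ)(S(t₀) − S∞ + ∑_{i=1}^{j} Iᵢ(t₀))`. -/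
theorem sp_series_formula
    (n : ℕ) (hn : 0 < n) (N : ℝ) (hN : 0 < N)
    (γ : Fin n → ℝ) (hγ : ∀ j, γ j ∈ Set.Ioo (0 : ℝ) 1)
    (φ : (Fin n → ℝ) → ℝ) (hφ : HypH n N φ)
    (S : ℕ → ℝ) (I : ℕ → Fin n → ℝ)
    (hsys : SPSystem γ φ S I) (hic : AdmissibleIC N S I)
    (Sinf : ℝ) (hSinf : Filter.Tendsto S Filter.atTop (nhds Sinf))
    (hIlim : ∀ j : Fin n, Filter.Tendsto (fun t => I t j) Filter.atTop (nhds 0)) :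
    ∀ (t₀ : ℕ) (j : Fin n),
      HasSum (fun t : ℕ => I (t₀ + t) j)
        ((1 / γ j) * (S t₀ - Sinf + ∑ i ∈ Finset.Iic j, I t₀ i)) :=
  sp_series_formula_general n hn N γ hγ φ hφ S I hsys hic Sinf hSinf hIlim
end

section
/- Let a > 0 and B(a) = T + F(a), where T is the lower bidiagonal transition matrix with diagonal entries 1−γⱼ and subdiagonal entries γⱼ, and F(a) has first row a·r = a(r₁,…,rₙ) with r ≥ 0, rₙ > 0, and all other rows zero. Then B(a) is irreducible and primitive. -/
/-!
Since `0 < γⱼ < 1`, the diagonal and the subdiagonal of `B(a)` are positive, and `a rₙ > 0` puts a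
positive entry in the corner `(1, n)`. So the graph of `B(a)` contains the cycle
`n → n-1 → ⋯ → 1 → n` and is strongly connected; with a loop at every vertex, every sufficiently
high power of `B(a)` is positive.
-/

/-- A nonnegative square matrix is irreducible if its directed adjacency graph is strongly
connected, i.e. for any `i, j` some power of the matrix has a positive `(i,j)` entry. -/
def Matrix.IsIrreducible' {n : ℕ} (B : Matrix (Fin n) (Fin n) ℝ) : Prop :=
  ∀ i j : Fin n, ∃ k : ℕ, 0 < (B ^ k) i j

/-- A nonnegative square matrix is primitive if some power of it is entrywise positive. -/
def Matrix.IsPrimitive' {n : ℕ} (B : Matrix (Fin n) (Fin n) ℝ) : Prop :=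
  ∃ k : ℕ, ∀ i j : Fin n, 0 < (B ^ k) i j

namespace Matrix

variable {R : Type*} [Semiring R] [PartialOrder R] [IsStrictOrderedRing R]

section Nonneg

variable {ι : Type*} [Fintype ι] [DecidableEq ι] {A : Matrix ι ι R}

theorem pow_add_apply_pos (hA : ∀ i j, 0 ≤ A i j) {k m : ℕ} {i l j : ι}
    (hk : 0 < (A ^ k) i l) (hm : 0 < (A ^ m) l j) : 0 < (A ^ (k + m)) i j := by
  rw [pow_add, mul_apply]
  exact Finset.sum_pos'
    (fun x _ => mul_nonneg (pow_apply_nonneg hA k i x) (pow_apply_nonneg hA m x j))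
    ⟨l, Finset.mem_univ l, mul_pos hk hm⟩

theorem pow_apply_pos_of_le (hA : ∀ i j, 0 ≤ A i j) (hdiag : ∀ i, 0 < A i i) {k m : ℕ}
    (hkm : k ≤ m) {i j : ι} (hk : 0 < (A ^ k) i j) : 0 < (A ^ m) i j := by
  induction m, hkm using Nat.le_induction with
  | base => exact hk
  | succ m _ ih => exact pow_add_apply_pos hA ih (by simpa using hdiag j)

end Nonneg

theorem pow_apply_pos_of_subdiag_pos {n : ℕ} {A : Matrix (Fin n) (Fin n) R}
    (hA : ∀ i j, 0 ≤ A i j)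
    (hsub : ∀ i j : Fin n, i.val = j.val + 1 → 0 < A i j) (d : ℕ) :
    ∀ i j : Fin n, i.val = j.val + d → 0 < (A ^ d) i j := by
  induction d with
  | zero =>
    intro i j hij
    obtain rfl : i = j := Fin.ext hij
    simp
  | succ d ih =>
    intro i j hij
    let i' : Fin n := ⟨j.val + d, by omega⟩
    rw [add_comm]
    exact pow_add_apply_pos hA (l := i') (by simpa using hsub i i' (by simp [i']; omega))
      (ih i' j rfl)

theorem isIrreducible'_of_subdiag_pos_of_corner_pos {m : ℕ}
    {A : Matrix (Fin (m + 1)) (Fin (m + 1)) ℝ} (hA : ∀ i j, 0 ≤ A i j)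
    (hsub : ∀ i j : Fin (m + 1), i.val = j.val + 1 → 0 < A i j)
    (hcorner : 0 < A 0 (Fin.last m)) : A.IsIrreducible' := by
  intro i j
  have hdown : 0 < (A ^ i.val) i 0 := pow_apply_pos_of_subdiag_pos hA hsub _ i 0 (by simp)
  have hup : 0 < (A ^ (m - j.val)) (Fin.last m) j :=
    pow_apply_pos_of_subdiag_pos hA hsub _ _ j (by simp; omega)
  have hcorner' : 0 < (A ^ (i.val + 1)) i (Fin.last m) :=
    pow_add_apply_pos hA hdown (by simpa using hcorner)
  exact ⟨_, pow_add_apply_pos hA hcorner' hup⟩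

theorem IsIrreducible'.isPrimitive' {n : ℕ} {A : Matrix (Fin n) (Fin n) ℝ}
    (hirr : A.IsIrreducible') (hA : ∀ i j, 0 ≤ A i j) (hdiag : ∀ i, 0 < A i i) :
    A.IsPrimitive' := by
  choose k hk using hirr
  refine ⟨Finset.univ.sup fun p : Fin n × Fin n => k p.1 p.2, fun i j => ?_⟩
  exact pow_apply_pos_of_le hA hdiag
    (Finset.le_sup (f := fun p : Fin n × Fin n => k p.1 p.2) (Finset.mem_univ (i, j))) (hk i j)

end Matrix

/-- `B(a) = T + F(a)` (transition part `T` lower bidiagonal with diagonal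
`1−γⱼ` and subdiagonal `γⱼ`; fertility part `F(a)` with first row `a·r`, `r ≥ 0`, `rₙ > 0`,
and zeros elsewhere) is irreducible and primitive. -/
theorem B_irreducible_primitive
    (n : ℕ) (hn : 0 < n) (a : ℝ) (ha : 0 < a)
    (γ r : Fin n → ℝ) (hγ : ∀ j, γ j ∈ Set.Ioo (0 : ℝ) 1)
    (hr : ∀ j, 0 ≤ r j) (hrn : 0 < r ⟨n - 1, Nat.sub_lt hn Nat.one_pos⟩)
    (T F : Matrix (Fin n) (Fin n) ℝ)
    (hT : ∀ i j : Fin n, T i j =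
      if i = j then 1 - γ j else if i.val = j.val + 1 then γ j else 0)
    (hF : ∀ i j : Fin n, F i j = if i.val = 0 then a * r j else 0) :
    (T + F).IsIrreducible' ∧ (T + F).IsPrimitive' := by
  obtain ⟨m, rfl⟩ := Nat.exists_eq_add_one_of_ne_zero hn.ne'
  have hTF : ∀ i j, (T + F) i j = T i j + F i j := fun _ _ => rfl
  have hTnonneg : ∀ i j, 0 ≤ T i j := fun i j => by
    have := hγ j; rw [hT]; split_ifs <;> linarith [this.1, this.2]
  have hFnonneg : ∀ i j, 0 ≤ F i j := fun i j => by
    rw [hF]; split_ifs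
    exacts [mul_nonneg ha.le (hr j), le_rfl]
  have hnonneg : ∀ i j, 0 ≤ (T + F) i j := fun i j => add_nonneg (hTnonneg i j) (hFnonneg i j)
  have hdiag : ∀ i, 0 < (T + F) i i := fun i => by
    rw [hTF, hT, if_pos rfl]; linarith [(hγ i).2, hFnonneg i i]
  have hsub : ∀ i j : Fin (m + 1), i.val = j.val + 1 → 0 < (T + F) i j := fun i j hij => by
    rw [hTF, hT, hF, if_neg (fun h => by subst h; omega), if_pos hij, if_neg (by omega)]
    linarith [(hγ j).1]
  have hcorner : 0 < (T + F) 0 (Fin.last m) := by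
    rw [hTF, hF, if_pos (Fin.val_zero _)]
    have : Fin.last m = ⟨m + 1 - 1, Nat.sub_lt hn Nat.one_pos⟩ := Fin.ext (by simp)
    rw [this]
    exact add_pos_of_nonneg_of_pos (hTnonneg _ _) (mul_pos ha hrn)
  have hirr := Matrix.isIrreducible'_of_subdiag_pos_of_corner_pos hnonneg hsub hcorner
  exact ⟨hirr, hirr.isPrimitive' hnonneg hdiag⟩
end

section
/- With B(a) = T + F(a) as above, the net reproductive value ρ(F(a)(I − T)⁻¹) equals a·δ where δ = ∑_{j=1}^n rⱼ/γⱼ. Consequently, sign(ρ(B(a)) − 1) = sign(a − 1/δ). -/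
/-!
Write `F = e₀ cᵀ` with `c = a • r`. For `μ` off the diagonal `{1 - γₖ}` of `T`, the matrix
determinant lemma shows that `μ` is an eigenvalue of `T + F` iff the Euler–Lotka function
`g(μ) = cᵀ (μ - T)⁻¹ e₀` equals `1`, and solving the bidiagonal system `(μ - T) x = e₀` gives
`g(μ) = ∑ⱼ cⱼ ∏_{k<j} γₖ / ∏_{k≤j} (μ - 1 + γₖ)`. The matrix `F (I - T)⁻¹ = e₀ (cᵀ (I - T)⁻¹)` has
rank one, so its spectral radius is its trace `g(1) = a δ`.

On `(maxₖ (1 - γₖ), ∞)` the function `g` is continuous and strictly decreasing, from `+∞` (its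
last term, with coefficient `a rₙ > 0`, has every factor `μ - 1 + γₖ` in its denominator) to `0`,
so it takes the value `1` at exactly one `ρ`. The bound `‖g(μ)‖ ≤ g(‖μ‖)` rules out eigenvalues
of modulus larger than `ρ`, hence `ρ(T + F) = ρ`, and monotonicity of `g` turns `sign(ρ - 1)` into
`sign(g(1) - 1) = sign(a δ - 1)`.
-/

/-- The spectral radius of a real matrix: the supremum of the moduli of its complex
eigenvalues. -/
noncomputable def specRad {n : ℕ} (M : Matrix (Fin n) (Fin n) ℝ) : ℝ :=
  sSup ((fun z : ℂ => ‖z‖) '' spectrum ℂ (M.map (fun x => (x : ℂ))))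

open Matrix Finset Filter Topology

section RankOne
variable {K ι : Type*} [Field K] [Fintype ι] [DecidableEq ι]

theorem mem_spectrum_add_vecMulVec_iff {M : Matrix ι ι K} {μ : K}
    (hμ : (algebraMap K _ μ - M).det ≠ 0) (u v : ι → K) :
    μ ∈ spectrum K (M + vecMulVec u v) ↔ v ⬝ᵥ (algebraMap K _ μ - M)⁻¹ *ᵥ u = 1 := by
  have hdet : (algebraMap K _ μ - (M + vecMulVec u v)).det =
      (algebraMap K _ μ - M).det * (1 - v ⬝ᵥ (algebraMap K _ μ - M)⁻¹ *ᵥ u) := by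
    rw [sub_add_eq_sub_sub, sub_eq_add_neg _ (vecMulVec u v), ← neg_vecMulVec,
      vecMulVec_eq Unit, det_add_replicateCol_mul_replicateRow hμ.isUnit, Matrix.mul_assoc,
      ← replicateCol_mulVec (ι := Unit)]
    simp [det_unique, mulVec_neg, sub_eq_add_neg]
  rw [spectrum.mem_iff, isUnit_iff_isUnit_det, isUnit_iff_ne_zero, hdet, not_not,
    mul_eq_zero, or_iff_right hμ, sub_eq_zero, eq_comm]

theorem mem_spectrum_vecMulVec_iff {μ : K} (hμ : μ ≠ 0) (u v : ι → K) :
    μ ∈ spectrum K (vecMulVec u v) ↔ v ⬝ᵥ u = μ := by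
  have hinv : (algebraMap K (Matrix ι ι K) μ)⁻¹ = algebraMap K _ μ⁻¹ :=
    inv_eq_left_inv (by rw [← map_mul, inv_mul_cancel₀ hμ, map_one])
  have h := mem_spectrum_add_vecMulVec_iff (M := 0) (μ := μ) ?_ u v
  · rw [zero_add, sub_zero, hinv, Algebra.algebraMap_eq_smul_one, smul_mulVec, one_mulVec,
      dotProduct_smul, smul_eq_mul, inv_mul_eq_one₀ hμ, eq_comm] at h
    exact h
  · simp [Algebra.algebraMap_eq_smul_one, hμ]

end RankOne

theorem specRad_vecMulVec {n : ℕ} (u v : Fin n → ℝ) (h : v ⬝ᵥ u ≠ 0) :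
    specRad (vecMulVec u v) = |v ⬝ᵥ u| := by
  have hmap : (vecMulVec u v).map ((↑) : ℝ → ℂ) =
      vecMulVec (fun i => (u i : ℂ)) (fun j => (v j : ℂ)) := by
    ext i j
    simp [vecMulVec_apply]
  have hdot : (fun j => (v j : ℂ)) ⬝ᵥ (fun i => (u i : ℂ)) = ((v ⬝ᵥ u : ℝ) : ℂ) := by
    simp [dotProduct]
  refine IsGreatest.csSup_eq ⟨⟨(v ⬝ᵥ u : ℝ), ?_, by simp⟩, ?_⟩
  · rw [hmap, mem_spectrum_vecMulVec_iff (by exact_mod_cast h), hdot]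
  · rintro _ ⟨μ, hμ, rfl⟩
    rcases eq_or_ne μ 0 with rfl | hμ0
    · simp
    · rw [hmap, mem_spectrum_vecMulVec_iff hμ0, hdot] at hμ
      simp [← hμ]

theorem StrictAntiOn.sign_sub_eq {f : ℝ → ℝ} {s : Set ℝ} (hf : StrictAntiOn f s) {x y : ℝ}
    (hx : x ∈ s) (hy : y ∈ s) : Real.sign (x - y) = Real.sign (f y - f x) := by
  rcases lt_trichotomy x y with h | rfl | h
  · rw [Real.sign_of_neg (sub_neg.2 h), Real.sign_of_neg (sub_neg.2 (hf hx hy h))]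
  · simp
  · rw [Real.sign_of_pos (sub_pos.2 h), Real.sign_of_pos (sub_pos.2 (hf hy hx h))]

theorem Real.sign_mul_of_pos {a : ℝ} (ha : 0 < a) (t : ℝ) : Real.sign (a * t) = Real.sign t := by
  rcases lt_trichotomy t 0 with h | rfl | h
  · rw [Real.sign_of_neg (mul_neg_of_pos_of_neg ha h), Real.sign_of_neg h]
  · simp
  · rw [Real.sign_of_pos (mul_pos ha h), Real.sign_of_pos h]

def lowerBidiag {R : Type*} [Ring R] {n : ℕ} (γ : Fin n → R) : Matrix (Fin n) (Fin n) R :=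
  of fun i j => if i = j then 1 - γ j else if i.val = j.val + 1 then γ j else 0

section LowerBidiag
variable {R : Type*} [CommRing R] {m : ℕ} (γ : Fin (m + 1) → R)

theorem lowerBidiag_mulVec_zero (v : Fin (m + 1) → R) :
    (lowerBidiag γ *ᵥ v) 0 = (1 - γ 0) * v 0 := by
  simp [lowerBidiag, mulVec, dotProduct, ite_mul]

theorem lowerBidiag_mulVec_succ (v : Fin (m + 1) → R) (i : Fin m) :
    (lowerBidiag γ *ᵥ v) i.succ = (1 - γ i.succ) * v i.succ + γ i.castSucc * v i.castSucc := by
  have hne : i.succ ≠ i.castSucc := i.castSucc_lt_succ.ne'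
  rw [mulVec, dotProduct, Fintype.sum_eq_add i.succ i.castSucc hne ?_]
  · simp [lowerBidiag, hne]
  · rintro k ⟨hk₁, hk₂⟩
    have : (i : ℕ) ≠ k := fun h => hk₂ (Fin.ext (by simp [h]))
    simp [lowerBidiag, Ne.symm hk₁, this]

theorem det_algebraMap_sub_lowerBidiag (μ : R) :
    (algebraMap R _ μ - lowerBidiag γ).det = ∏ k, (μ - 1 + γ k) := by
  rw [det_of_isLowerTriangular]
  · simp [lowerBidiag, algebraMap_matrix_apply, sub_sub_eq_add_sub, add_sub_right_comm]
  · intro i j hij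
    have hij : i < j := hij
    have h₁ : i ≠ j := hij.ne
    have h₂ : (i : ℕ) ≠ j + 1 := by omega
    simp [lowerBidiag, algebraMap_matrix_apply, h₁, h₂]

end LowerBidiag

section Resolvent
variable {K : Type*} [Field K] {m : ℕ}

def resolventCol (γ : Fin (m + 1) → K) (μ : K) (j : Fin (m + 1)) : K :=
  (∏ k ∈ Iio j, γ k) / ∏ k ∈ Iic j, (μ - 1 + γ k)

variable {γ : Fin (m + 1) → K} {μ : K}

theorem resolventCol_zero (hμ : ∀ k, μ - 1 + γ k ≠ 0) :
    (μ - 1 + γ 0) * resolventCol γ μ 0 = 1 := by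
  have hIio : Iio (0 : Fin (m + 1)) = ∅ := by ext; simp
  have hIic : Iic (0 : Fin (m + 1)) = {0} := by ext; simp
  simp [resolventCol, hIio, hIic, hμ 0]

theorem resolventCol_succ (hμ : ∀ k, μ - 1 + γ k ≠ 0) (i : Fin m) :
    (μ - 1 + γ i.succ) * resolventCol γ μ i.succ = γ i.castSucc * resolventCol γ μ i.castSucc := by
  have hIio : Iio i.succ = Iic i.castSucc := by ext; simp [Fin.lt_def, Fin.le_def]
  have hIic : Iic i.succ = insert i.succ (Iic i.castSucc) := by
    ext
    simp [Fin.ext_iff, Fin.le_def]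
    omega
  have hprod : ∏ k ∈ Iic i.castSucc, γ k = γ i.castSucc * ∏ k ∈ Iio i.castSucc, γ k := by
    rw [← Iio_insert, prod_insert notMem_Iio_self]
  rw [resolventCol, resolventCol, hIio, hIic, prod_insert (by simp [Fin.le_def]), hprod]
  have hden : ∏ k ∈ Iic i.castSucc, (μ - 1 + γ k) ≠ 0 := prod_ne_zero_iff.2 fun k _ => hμ k
  have hsucc := hμ i.succ
  field_simp

theorem algebraMap_sub_lowerBidiag_mulVec_resolventCol (hμ : ∀ k, μ - 1 + γ k ≠ 0) :
    (algebraMap K _ μ - lowerBidiag γ) *ᵥ resolventCol γ μ = Pi.single 0 1 := by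
  ext i
  rw [sub_mulVec, Algebra.algebraMap_eq_smul_one, smul_mulVec, one_mulVec, Pi.sub_apply,
    Pi.smul_apply, smul_eq_mul]
  cases i using Fin.cases with
  | zero => rw [lowerBidiag_mulVec_zero, Pi.single_eq_same]; linear_combination resolventCol_zero hμ
  | succ i =>
    rw [lowerBidiag_mulVec_succ, Pi.single_eq_of_ne (Fin.succ_ne_zero i)]
    linear_combination resolventCol_succ hμ i

theorem inv_algebraMap_sub_lowerBidiag_mulVec (hμ : ∀ k, μ - 1 + γ k ≠ 0) :
    (algebraMap K _ μ - lowerBidiag γ)⁻¹ *ᵥ Pi.single 0 1 = resolventCol γ μ := by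
  have : Invertible (algebraMap K _ μ - lowerBidiag γ) := invertibleOfIsUnitDet _ <| by
    rw [det_algebraMap_sub_lowerBidiag]
    exact isUnit_iff_ne_zero.2 (prod_ne_zero_iff.2 fun k _ => hμ k)
  exact inv_mulVec_eq_vec (algebraMap_sub_lowerBidiag_mulVec_resolventCol hμ).symm

end Resolvent

section EulerLotka
variable {K : Type*} [Field K] {m : ℕ}

def eulerLotka (γ c : Fin (m + 1) → K) (μ : K) : K := c ⬝ᵥ resolventCol γ μ

theorem map_eulerLotka {L : Type*} [Field L] (f : K →+* L) (γ c : Fin (m + 1) → K) (μ : K) :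
    f (eulerLotka γ c μ) = eulerLotka (fun k => f (γ k)) (fun j => f (c j)) (f μ) := by
  simp [eulerLotka, resolventCol, dotProduct, map_sum, map_prod, map_div₀]

theorem eulerLotka_one {γ : Fin (m + 1) → K} (hγ : ∀ k, γ k ≠ 0) (c : Fin (m + 1) → K) :
    eulerLotka γ c 1 = ∑ j, c j / γ j := by
  unfold eulerLotka dotProduct
  refine Finset.sum_congr rfl fun j _ => ?_
  have : ∏ k ∈ Iio j, γ k ≠ 0 := prod_ne_zero_iff.2 fun k _ => hγ k
  simp [resolventCol, ← Iio_insert, prod_insert notMem_Iio_self, div_eq_mul_inv, this]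

theorem mem_spectrum_lowerBidiag_add_vecMulVec_iff {K : Type*} [Field K] {m : ℕ}
    {γ : Fin (m + 1) → K} {μ : K} (hμ : ∀ k, μ - 1 + γ k ≠ 0) (c : Fin (m + 1) → K) :
    μ ∈ spectrum K (lowerBidiag γ + vecMulVec (Pi.single 0 1) c) ↔ eulerLotka γ c μ = 1 := by
  have hdet : (algebraMap K _ μ - lowerBidiag γ).det ≠ 0 := by
    rw [det_algebraMap_sub_lowerBidiag]
    exact prod_ne_zero_iff.2 fun k _ => hμ k
  rw [mem_spectrum_add_vecMulVec_iff hdet, inv_algebraMap_sub_lowerBidiag_mulVec hμ, eulerLotka]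

end EulerLotka

section RealEulerLotka
variable {m : ℕ} {γ c : Fin (m + 1) → ℝ}

def diagMax (γ : Fin (m + 1) → ℝ) : ℝ := univ.sup' univ_nonempty fun k => 1 - γ k

theorem diagMax_lt_iff {x : ℝ} : diagMax γ < x ↔ ∀ k, 1 - γ k < x := by
  simp [diagMax]

theorem one_sub_le_diagMax (k : Fin (m + 1)) : 1 - γ k ≤ diagMax γ :=
  le_sup' (fun k => 1 - γ k) (mem_univ k)

theorem prod_Iic_sub_one_add_pos {x : ℝ} (hx : diagMax γ < x) (j : Fin (m + 1)) :
    0 < ∏ k ∈ Iic j, (x - 1 + γ k) :=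
  prod_pos fun k _ => by linarith [diagMax_lt_iff.1 hx k]

theorem resolventCol_nonneg (hγ : ∀ k, 0 ≤ γ k) {x : ℝ} (hx : diagMax γ < x) (j : Fin (m + 1)) :
    0 ≤ resolventCol γ x j :=
  div_nonneg (prod_nonneg fun k _ => hγ k) (prod_Iic_sub_one_add_pos hx j).le

theorem resolventCol_strictAntiOn (hγ : ∀ k, 0 < γ k) (j : Fin (m + 1)) :
    StrictAntiOn (resolventCol γ · j) (Set.Ioi (diagMax γ)) := fun x hx y _ hxy =>
  div_lt_div_of_pos_left (prod_pos fun k _ => hγ k) (prod_Iic_sub_one_add_pos hx j)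
    (prod_lt_prod_of_nonempty (fun k _ => by linarith [diagMax_lt_iff.1 hx k])
      (fun k _ => by linarith) ⟨j, mem_Iic.2 le_rfl⟩)

theorem eulerLotka_strictAntiOn (hγ : ∀ k, 0 < γ k) (hc : ∀ j, 0 ≤ c j) {j₀ : Fin (m + 1)}
    (hj₀ : 0 < c j₀) : StrictAntiOn (eulerLotka γ c) (Set.Ioi (diagMax γ)) := fun _ hx _ hy hxy =>
  sum_lt_sum (fun j _ => mul_le_mul_of_nonneg_left
      ((resolventCol_strictAntiOn hγ j).antitoneOn hx hy hxy.le) (hc j))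
    ⟨j₀, mem_univ _, mul_lt_mul_of_pos_left (resolventCol_strictAntiOn hγ j₀ hx hy hxy) hj₀⟩

theorem continuousOn_eulerLotka : ContinuousOn (eulerLotka γ c) (Set.Ioi (diagMax γ)) := by
  unfold eulerLotka resolventCol dotProduct
  fun_prop (disch := exact fun x hx => (prod_Iic_sub_one_add_pos hx _).ne')

theorem tendsto_eulerLotka_atTop (hγ : ∀ k, 0 ≤ γ k) :
    Tendsto (eulerLotka γ c) atTop (𝓝 0) := by
  have hD (j : Fin (m + 1)) : Tendsto (fun x => ∏ k ∈ Iic j, (x - 1 + γ k)) atTop atTop := by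
    refine tendsto_atTop_mono' _ ((eventually_ge_atTop 2).mono fun x hx => ?_)
      (tendsto_atTop_add_const_right _ (γ j - 1) tendsto_id)
    have h1 : ∀ k ∈ Iic j, 1 ≤ x - 1 + γ k := fun k _ => by linarith [hγ k]
    change x + (γ j - 1) ≤ ∏ k ∈ Iic j, (x - 1 + γ k)
    rw [← mul_prod_erase _ _ (mem_Iic.2 le_rfl)]
    calc x + (γ j - 1) = (x - 1 + γ j) * 1 := by ring
      _ ≤ _ := mul_le_mul_of_nonneg_left (one_le_prod fun k hk => h1 k (mem_of_mem_erase hk))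
          (by linarith [h1 j (mem_Iic.2 le_rfl)])
  unfold eulerLotka dotProduct resolventCol
  simpa using tendsto_finsetSum univ fun j _ =>
    (tendsto_const_nhds.div_atTop (hD j)).const_mul (c j)

theorem tendsto_eulerLotka_nhdsGT (hγ : ∀ k, 0 < γ k) (hc : ∀ j, 0 ≤ c j)
    (hlast : 0 < c (Fin.last m)) : Tendsto (eulerLotka γ c) (𝓝[>] diagMax γ) atTop := by
  set D := fun x : ℝ => ∏ k ∈ Iic (Fin.last m), (x - 1 + γ k)
  obtain ⟨k₀, -, hk₀⟩ := exists_mem_eq_sup' univ_nonempty fun k => 1 - γ k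
  have hD0 : D (diagMax γ) = 0 :=
    prod_eq_zero (mem_Iic.2 (Fin.le_last k₀)) (by simp [diagMax, hk₀])
  have hD : Tendsto D (𝓝[>] diagMax γ) (𝓝[>] 0) := by
    refine tendsto_nhdsWithin_iff.2 ⟨?_, eventually_nhdsWithin_of_forall fun x hx =>
      prod_Iic_sub_one_add_pos hx _⟩
    exact hD0 ▸ (by fun_prop : Continuous D).continuousWithinAt.tendsto
  refine tendsto_atTop_mono' _ (eventually_nhdsWithin_of_forall fun x hx => ?_)
    ((tendsto_inv_nhdsGT_zero.comp hD).const_mul_atTop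
      (mul_pos hlast (prod_pos fun k _ => hγ k) : 0 < c (Fin.last m) * ∏ k ∈ Iio (Fin.last m), γ k))
  calc _ = c (Fin.last m) * resolventCol γ x (Fin.last m) := by
        simp [resolventCol, D, div_eq_mul_inv, mul_assoc]
    _ ≤ eulerLotka γ c x := single_le_sum (f := fun j => c j * resolventCol γ x j)
        (fun j _ => mul_nonneg (hc j) (resolventCol_nonneg (fun k => (hγ k).le) hx j)) (mem_univ _)

theorem exists_eulerLotka_eq_one (hγ : ∀ k, 0 < γ k) (hc : ∀ j, 0 ≤ c j)
    (hlast : 0 < c (Fin.last m)) : ∃ x, diagMax γ < x ∧ eulerLotka γ c x = 1 :=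
  isPreconnected_Ioi.intermediate_value_Ioi (le_principal_iff.2 (Ioi_mem_atTop _))
    (le_principal_iff.2 self_mem_nhdsWithin) continuousOn_eulerLotka
    (tendsto_eulerLotka_atTop fun k => (hγ k).le) (tendsto_eulerLotka_nhdsGT hγ hc hlast)
    (Set.mem_Ioi.2 one_pos)

theorem norm_resolventCol_le (hγ : ∀ k, γ k ∈ Set.Icc 0 1) {μ : ℂ} (hμ : diagMax γ < ‖μ‖)
    (j : Fin (m + 1)) : ‖resolventCol (fun k => (γ k : ℂ)) μ j‖ ≤ resolventCol γ ‖μ‖ j := by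
  have hfactor (k : Fin (m + 1)) : ‖μ‖ - 1 + γ k ≤ ‖μ - 1 + γ k‖ := by
    have := norm_sub_norm_le μ ((1 - γ k : ℝ) : ℂ)
    rw [Complex.norm_real, Real.norm_of_nonneg (sub_nonneg.2 (hγ k).2),
      show μ - ((1 - γ k : ℝ) : ℂ) = μ - 1 + γ k by push_cast; ring] at this
    linarith
  rw [resolventCol, resolventCol, norm_div, norm_prod, norm_prod]
  refine (div_le_div_of_nonneg_left (prod_nonneg fun k _ => norm_nonneg _)
    (prod_Iic_sub_one_add_pos hμ j) (prod_le_prod (fun k _ => ?_) fun k _ => hfactor k)).trans_eq ?_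
  · linarith [diagMax_lt_iff.1 hμ k]
  · simp [Complex.norm_real, Real.norm_of_nonneg (hγ _).1]

theorem norm_eulerLotka_le (hγ : ∀ k, γ k ∈ Set.Icc 0 1) (hc : ∀ j, 0 ≤ c j) {μ : ℂ}
    (hμ : diagMax γ < ‖μ‖) :
    ‖eulerLotka (fun k => (γ k : ℂ)) (fun j => (c j : ℂ)) μ‖ ≤ eulerLotka γ c ‖μ‖ := by
  unfold eulerLotka dotProduct
  refine (norm_sum_le _ _).trans <| sum_le_sum fun j _ => ?_
  rw [norm_mul, Complex.norm_real, Real.norm_of_nonneg (hc j)]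
  exact mul_le_mul_of_nonneg_left (norm_resolventCol_le hγ hμ j) (hc j)

theorem specRad_lowerBidiag_add_vecMulVec (hγ : ∀ k, γ k ∈ Set.Ioo 0 1) (hc : ∀ j, 0 ≤ c j)
    (hlast : 0 < c (Fin.last m)) {ρ : ℝ} (hρ : diagMax γ < ρ) (hρ1 : eulerLotka γ c ρ = 1) :
    specRad (lowerBidiag γ + vecMulVec (Pi.single 0 1) c) = ρ := by
  have hmap : (lowerBidiag γ + vecMulVec (Pi.single 0 1) c).map ((↑) : ℝ → ℂ) =
      lowerBidiag (fun k => (γ k : ℂ)) + vecMulVec (Pi.single 0 1) (fun j => (c j : ℂ)) := by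
    ext i j
    simp only [map_apply, Matrix.add_apply, lowerBidiag, vecMulVec_apply, of_apply, Pi.single_apply]
    split_ifs <;> push_cast <;> ring
  have hne {μ : ℂ} (hμ : diagMax γ < ‖μ‖) (k : Fin (m + 1)) : μ - 1 + γ k ≠ 0 := by
    intro h
    rw [show μ = ((1 - γ k : ℝ) : ℂ) by push_cast; linear_combination h, Complex.norm_real,
      Real.norm_of_nonneg (sub_nonneg.2 (hγ k).2.le)] at hμ
    exact hμ.not_ge (one_sub_le_diagMax k)
  have hnorm : ‖(ρ : ℂ)‖ = ρ := by
    rw [Complex.norm_real, Real.norm_of_nonneg]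
    exact (sub_nonneg.2 (hγ 0).2.le).trans ((one_sub_le_diagMax 0).trans hρ.le)
  have hρ' : diagMax γ < ‖(ρ : ℂ)‖ := by rwa [hnorm]
  unfold specRad
  rw [hmap]
  refine IsGreatest.csSup_eq ⟨⟨ρ, ?_, ?_⟩, ?_⟩
  · rw [mem_spectrum_lowerBidiag_add_vecMulVec_iff (hne hρ')]
    simpa [hρ1] using (map_eulerLotka Complex.ofRealHom γ c ρ).symm
  · exact hnorm
  · rintro _ ⟨μ, hμ, rfl⟩
    by_contra! hlt
    have hμ' : diagMax γ < ‖μ‖ := hρ.trans hlt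
    rw [mem_spectrum_lowerBidiag_add_vecMulVec_iff (hne hμ')] at hμ
    have := norm_eulerLotka_le (fun k => Set.Ioo_subset_Icc_self (hγ k)) hc hμ'
    rw [hμ, norm_one] at this
    linarith [eulerLotka_strictAntiOn (fun k => (hγ k).1) hc hlast hρ hμ' hlt]

theorem specRad_vecMulVec_mul_inv_one_sub_lowerBidiag {m : ℕ} {γ c : Fin (m + 1) → ℝ}
    (hγ : ∀ k, γ k ≠ 0) (h : eulerLotka γ c 1 ≠ 0) :
    specRad (vecMulVec (Pi.single 0 1) c * (1 - lowerBidiag γ)⁻¹) = |eulerLotka γ c 1| := by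
  have hcol : (1 - lowerBidiag γ)⁻¹ *ᵥ Pi.single 0 1 = resolventCol γ 1 := by
    simpa using inv_algebraMap_sub_lowerBidiag_mulVec (μ := (1 : ℝ)) (fun k => by simpa using hγ k)
  have hdot : c ᵥ* (1 - lowerBidiag γ)⁻¹ ⬝ᵥ Pi.single 0 1 = eulerLotka γ c 1 := by
    rw [← dotProduct_mulVec, hcol, eulerLotka]
  rw [vecMulVec_mul, specRad_vecMulVec _ _ (hdot ▸ h), hdot]

end RealEulerLotka

/-- the net reproductive value `ρ(F(a)(I − T)⁻¹)` equals `a·δ`, where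
`δ = ∑ⱼ rⱼ/γⱼ`; consequently `sign(ρ(B(a)) − 1) = sign(a − 1/δ)`. -/
theorem net_reproductive_value
    (n : ℕ) (hn : 0 < n) (a : ℝ) (ha : 0 < a)
    (γ r : Fin n → ℝ) (hγ : ∀ j, γ j ∈ Set.Ioo (0 : ℝ) 1)
    (hr : ∀ j, 0 ≤ r j) (hrn : 0 < r ⟨n - 1, Nat.sub_lt hn Nat.one_pos⟩)
    (T F : Matrix (Fin n) (Fin n) ℝ)
    (hT : ∀ i j : Fin n, T i j =
      if i = j then 1 - γ j else if i.val = j.val + 1 then γ j else 0)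
    (hF : ∀ i j : Fin n, F i j = if i.val = 0 then a * r j else 0)
    (δ : ℝ) (hδ : δ = ∑ j, r j / γ j) :
    specRad (F * (1 - T)⁻¹) = a * δ ∧
    Real.sign (specRad (T + F) - 1) = Real.sign (a - 1 / δ) := by
  obtain ⟨m, rfl⟩ : ∃ m, n = m + 1 := ⟨n - 1, by omega⟩
  obtain rfl : T = lowerBidiag γ := Matrix.ext hT
  obtain rfl : F = vecMulVec (Pi.single 0 1) (a • r) := by
    ext i j
    rw [hF, vecMulVec_apply]
    by_cases hi : i = 0 <;> simp [hi]
  have hγ₀ (k : Fin (m + 1)) : 0 < γ k := (hγ k).1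
  have hc (j : Fin (m + 1)) : 0 ≤ (a • r) j := mul_nonneg ha.le (hr j)
  have hlast : 0 < (a • r) (Fin.last m) := mul_pos ha hrn
  have hδ₀ : 0 < δ := hδ ▸ sum_pos' (fun j _ => div_nonneg (hr j) (hγ₀ j).le)
    ⟨Fin.last m, mem_univ _, div_pos hrn (hγ₀ _)⟩
  have hNRV : eulerLotka γ (a • r) 1 = a * δ := by
    simp [eulerLotka_one (fun k => (hγ₀ k).ne'), hδ, mul_sum, mul_div_assoc]
  refine ⟨?_, ?_⟩
  · rw [specRad_vecMulVec_mul_inv_one_sub_lowerBidiag (fun k => (hγ₀ k).ne')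
      (hNRV ▸ (mul_pos ha hδ₀).ne'), hNRV, abs_of_pos (mul_pos ha hδ₀)]
  obtain ⟨ρ, hρ, hρ1⟩ := exists_eulerLotka_eq_one hγ₀ hc hlast
  have h1 : (1 : ℝ) ∈ Set.Ioi (diagMax γ) := diagMax_lt_iff.2 fun k => by linarith [hγ₀ k]
  rw [specRad_lowerBidiag_add_vecMulVec hγ hc hlast hρ hρ1,
    (eulerLotka_strictAntiOn hγ₀ hc hlast).sign_sub_eq hρ h1, hρ1, hNRV,
    ← Real.sign_mul_of_pos hδ₀ (a - 1 / δ), mul_sub, mul_one_div_cancel hδ₀.ne', mul_comm δ a]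
end

section
/- (Final size upper bound.) Suppose R₀ = Nδ > 1, where δ = ∑ⱼ rⱼ/γⱼ. Then for every solution of the staged progression system with admissible initial condition, the limit S∞ satisfies S∞ ≤ N/R₀ = 1/δ. -/
open Filter Topology

/-!
Summing the stage equations over time from a time `T` on shows that the total time spent in
stage `j` is `(I₁(T) + ⋯ + Iⱼ(T) + S(T) - S∞) / γⱼ`; in particular `I(t) → 0`. Near `0` the
incidence satisfies `φ(x) ≥ ∑ⱼ (rⱼ - ε) xⱼ` for nonnegative `x`. If `S∞ > 1/δ`, summing
`S(t) φ(I(t)) ≥ S∞ φ(I(t))` from a late time `T` on gives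
`S(T) - S∞ ≥ S∞ (δ - εG) (S(T) - S∞) + S∞ (rₙ/γₙ - εG) ‖I(T)‖₁` with `G = ∑ⱼ 1/γⱼ`,
which contradicts `‖I(T)‖₁ > 0` once `ε` is small.
-/

open Finset

theorem hasSum_of_eq_sub_of_tendsto {a b : ℕ → ℝ} {L : ℝ} (hb : ∀ t, 0 ≤ b t)
    (hrec : ∀ t, a (t + 1) = a t - b t) (hL : Tendsto a atTop (𝓝 L)) :
    HasSum b (a 0 - L) := by
  have hpartial : ∀ M, ∑ t ∈ range M, b t = a 0 - a M := by
    intro M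
    induction M with
    | zero => simp
    | succ M ih => rw [sum_range_succ, ih, hrec M]; ring
  rw [hasSum_iff_tendsto_nat_of_nonneg hb, funext hpartial]
  exact tendsto_const_nhds.sub hL

theorem hasSum_mul_of_eq_mul_add {a b : ℕ → ℝ} {g B : ℝ} (hg : 0 < g) (ha : ∀ t, 0 ≤ a t)
    (hb : ∀ t, 0 ≤ b t) (hrec : ∀ t, a (t + 1) = (1 - g) * a t + b t) (hB : HasSum b B) :
    HasSum (fun t => g * a t) (a 0 + B) := by
  have hpartial : ∀ M, ∑ t ∈ range M, g * a t = a 0 - a M + ∑ t ∈ range M, b t := by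
    intro M
    induction M with
    | zero => simp
    | succ M ih => rw [sum_range_succ, sum_range_succ, ih, hrec M]; ring
  have hga : ∀ t, 0 ≤ g * a t := fun t => mul_nonneg hg.le (ha t)
  have hsummable : Summable fun t => g * a t :=
    summable_of_sum_range_le (c := a 0 + B) hga fun M => by
      rw [hpartial M]
      linarith [ha M, sum_le_hasSum (range M) (fun t _ => hb t) hB]
  have ha0 : Tendsto a atTop (𝓝 0) := by
    simpa [hg.ne'] using hsummable.tendsto_atTop_zero.const_mul g⁻¹
  rw [hasSum_iff_tendsto_nat_of_nonneg hga, funext hpartial]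
  simpa using (tendsto_const_nhds.sub ha0).add hB.tendsto_sum_nat

theorem eventually_sum_sub_mul_le {ι : Type*} [Fintype ι] [DecidableEq ι]
    {f : (ι → ℝ) → ℝ} (hf : DifferentiableAt ℝ f 0) (hf0 : f 0 = 0) {ε : ℝ} (hε : 0 < ε) :
    ∀ᶠ x in 𝓝 0, (∀ j, 0 ≤ x j) → ∑ j, (fderiv ℝ f 0 (Pi.single j 1) - ε) * x j ≤ f x := by
  filter_upwards [(hasFDerivAt_iff_isLittleO_nhds_zero.1 hf.hasFDerivAt).def hε] with x hx hx0
  rw [zero_add, hf0, sub_zero, Real.norm_eq_abs] at hx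
  have hlin : fderiv ℝ f 0 x = ∑ j, fderiv ℝ f 0 (Pi.single j 1) * x j := by
    conv_lhs => rw [pi_eq_sum_univ' x]
    simp [mul_comm]
  have hnorm : ‖x‖ ≤ ∑ j, x j :=
    (pi_norm_le_iff_of_nonneg (sum_nonneg fun j _ => hx0 j)).2 fun i => by
      rw [Real.norm_of_nonneg (hx0 i)]
      exact single_le_sum (fun j _ => hx0 j) (mem_univ i)
  calc ∑ j, (fderiv ℝ f 0 (Pi.single j 1) - ε) * x j
      = fderiv ℝ f 0 x - ε * ∑ j, x j := by
        rw [hlin, mul_sum, ← sum_sub_distrib]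
        exact sum_congr rfl fun j _ => by ring
    _ ≤ fderiv ℝ f 0 x - ε * ‖x‖ := by gcongr
    _ ≤ f x := by linarith [(abs_sub_le_iff.1 hx).2]

theorem Fin.sum_Iic_succ {M : Type*} [AddCommMonoid M] {m : ℕ} (f : Fin (m + 1) → M)
    (i : Fin m) : ∑ k ∈ Iic i.succ, f k = f i.succ + ∑ k ∈ Iic i.castSucc, f k := by
  have hIio : Iio i.succ = Iic i.castSucc := by
    ext k
    simp [Fin.le_castSucc_iff]
  rw [Iic_eq_cons_Iio, Finset.sum_cons, hIio]

theorem le_sum_sub_mul_add_div {ι : Type*} [Fintype ι] {r γ A : ι → ℝ} {D F ε : ℝ} (l : ι)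
    (hr : ∀ j, 0 ≤ r j) (hγ : ∀ j, 0 < γ j) (hA : ∀ j, 0 ≤ A j) (hAF : ∀ j, A j ≤ F)
    (hl : A l = F) (hε : 0 ≤ ε) :
    (∑ j, r j / γ j - ε * ∑ j, 1 / γ j) * D + (r l / γ l - ε * ∑ j, 1 / γ j) * F ≤
      ∑ j, (r j - ε) * ((A j + D) / γ j) := by
  have hlast : r l / γ l * F ≤ ∑ j, r j * A j / γ j := by
    rw [← hl, div_mul_eq_mul_div]
    exact single_le_sum (f := fun j => r j * A j / γ j)
      (fun j _ => div_nonneg (mul_nonneg (hr j) (hA j)) (hγ j).le) (mem_univ l)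
  have hmass : ∑ j, (A j + D) / γ j ≤ (F + D) * ∑ j, 1 / γ j := by
    rw [mul_sum]
    gcongr with j
    rw [mul_one_div]
    exact div_le_div_of_nonneg_right (by linarith [hAF j]) (hγ j).le
  have hsplit : ∑ j, (r j - ε) * ((A j + D) / γ j) =
      ∑ j, r j * A j / γ j + (∑ j, r j / γ j) * D - ε * ∑ j, (A j + D) / γ j := by
    rw [sum_mul, mul_sum, ← sum_add_distrib, ← sum_sub_distrib]
    exact sum_congr rfl fun j _ => by ring
  rw [hsplit]
  linarith [mul_le_mul_of_nonneg_left hmass hε]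

namespace SPSystem

variable {m : ℕ} {γ : Fin (m + 1) → ℝ} {φ : (Fin (m + 1) → ℝ) → ℝ} {S : ℕ → ℝ}
  {I : ℕ → Fin (m + 1) → ℝ}

theorem step_zero (h : SPSystem γ φ S I) (t : ℕ) :
    I (t + 1) 0 = (1 - γ 0) * I t 0 + φ (I t) * S t :=
  h.2.1 t m.succ_pos

theorem step_succ (h : SPSystem γ φ S I) (t : ℕ) (i : Fin m) :
    I (t + 1) i.succ = (1 - γ i.succ) * I t i.succ + γ i.castSucc * I t i.castSucc :=
  h.2.2 t i.castSucc i.succ.isLt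

theorem shift (h : SPSystem γ φ S I) (T : ℕ) :
    SPSystem γ φ (fun t => S (t + T)) (fun t => I (t + T)) := by
  refine ⟨fun t => ?_, fun t h0 => ?_, fun t j hj => ?_⟩ <;> simp only [Nat.add_right_comm t 1 T]
  exacts [h.1 _, h.2.1 _ h0, h.2.2 _ j hj]

theorem sum_infected_succ (h : SPSystem γ φ S I) (t : ℕ) :
    ∑ j, I (t + 1) j = ∑ j, I t j + φ (I t) * S t - γ (Fin.last m) * I t (Fin.last m) := by
  have hout := Fin.sum_univ_succ fun j => γ j * I t j
  have hout' := Fin.sum_univ_castSucc fun j => γ j * I t j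
  rw [Fin.sum_univ_succ, Fin.sum_univ_succ (I t), h.step_zero]
  simp only [h.step_succ, sum_add_distrib, sub_mul, one_mul, sum_sub_distrib]
  linarith

theorem mul_le_infected_succ (h : SPSystem γ φ S I) {t : ℕ} (hinc : 0 ≤ φ (I t) * S t)
    (hout : ∀ i, 0 ≤ γ i * I t i) (j : Fin (m + 1)) : (1 - γ j) * I t j ≤ I (t + 1) j := by
  cases j using Fin.cases with
  | zero => rw [h.step_zero]; linarith
  | succ i => rw [h.step_succ]; linarith [hout i.castSucc]

theorem forward_invariant (h : SPSystem γ φ S I) {N : ℝ} (hγ0 : ∀ j, 0 ≤ γ j) (hγ1 : ∀ j, γ j ≤ 1)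
    (hφ : ∀ x ∈ stateSet (m + 1) N, 0 ≤ φ x ∧ φ x < 1) (hic : AdmissibleIC N S I) (t : ℕ) :
    0 < S t ∧ (∀ j, 0 ≤ I t j) ∧ S t + ∑ j, I t j ≤ N := by
  induction t with
  | zero => exact ⟨hic.1, hic.2.1, hic.2.2.2⟩
  | succ t ih =>
    obtain ⟨hS, hI, hN⟩ := ih
    have hφt := hφ (I t) ⟨hI, by linarith⟩
    have hinc : 0 ≤ φ (I t) * S t := mul_nonneg hφt.1 hS.le
    have hout : ∀ i, 0 ≤ γ i * I t i := fun i => mul_nonneg (hγ0 i) (hI i)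
    refine ⟨?_, fun j => ?_, ?_⟩
    · rw [h.1]
      exact mul_pos (by linarith [hφt.2]) hS
    · exact (mul_nonneg (by linarith [hγ1 j]) (hI j)).trans (h.mul_le_infected_succ hinc hout j)
    · rw [h.1, h.sum_infected_succ]
      linarith [hout (Fin.last m)]

theorem infected_pos (h : SPSystem γ φ S I) (hγ1 : ∀ j, γ j < 1) (hinc : ∀ t, 0 ≤ φ (I t) * S t)
    (hout : ∀ t i, 0 ≤ γ i * I t i) {j : Fin (m + 1)} (hj : 0 < I 0 j) (t : ℕ) : 0 < I t j := by
  induction t with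
  | zero => exact hj
  | succ t ih =>
    exact (mul_pos (by linarith [hγ1 j]) ih).trans_le (h.mul_le_infected_succ (hinc t) (hout t) j)

theorem limit_le (h : SPSystem γ φ S I) (hS : ∀ t, 0 ≤ S t) (hφ : ∀ t, 0 ≤ φ (I t))
    {Sinf : ℝ} (hSinf : Tendsto S atTop (𝓝 Sinf)) (t : ℕ) : Sinf ≤ S t :=
  Antitone.le_of_tendsto (antitone_nat_of_succ_le fun t => by
    rw [h.1]; linarith [mul_nonneg (hφ t) (hS t)]) hSinf t

theorem hasSum_incidence (h : SPSystem γ φ S I) (hS : ∀ t, 0 ≤ S t) (hφ : ∀ t, 0 ≤ φ (I t))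
    {Sinf : ℝ} (hSinf : Tendsto S atTop (𝓝 Sinf)) :
    HasSum (fun t => φ (I t) * S t) (S 0 - Sinf) :=
  hasSum_of_eq_sub_of_tendsto (fun t => mul_nonneg (hφ t) (hS t)) (fun t => by rw [h.1]; ring)
    hSinf

theorem hasSum_outflow (h : SPSystem γ φ S I) (hγ : ∀ j, 0 < γ j) (hI : ∀ t j, 0 ≤ I t j)
    (hinc : ∀ t, 0 ≤ φ (I t) * S t) {D : ℝ} (hD : HasSum (fun t => φ (I t) * S t) D)
    (j : Fin (m + 1)) : HasSum (fun t => γ j * I t j) (∑ k ∈ Iic j, I 0 k + D) := by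
  induction j using Fin.induction with
  | zero =>
    rw [← bot_eq_zero, Iic_bot, sum_singleton]
    exact hasSum_mul_of_eq_mul_add (hγ 0) (hI · 0) hinc h.step_zero hD
  | succ i ih =>
    rw [Fin.sum_Iic_succ, add_assoc]
    exact hasSum_mul_of_eq_mul_add (hγ _) (hI · _) (fun t => mul_nonneg (hγ _).le (hI t _))
      (h.step_succ · i) ih

theorem tendsto_infected_zero (h : SPSystem γ φ S I) (hγ : ∀ j, 0 < γ j) (hI : ∀ t j, 0 ≤ I t j)
    (hinc : ∀ t, 0 ≤ φ (I t) * S t) {D : ℝ} (hD : HasSum (fun t => φ (I t) * S t) D) :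
    Tendsto I atTop (𝓝 0) :=
  tendsto_pi_nhds.2 fun j =>
    ((summable_mul_left_iff (hγ j).ne').1
      (h.hasSum_outflow hγ hI hinc hD j).summable).tendsto_atTop_zero

theorem limit_mul_sum_le_of_le_incidence (h : SPSystem γ φ S I) (hγ : ∀ j, 0 < γ j)
    (hS : ∀ t, 0 ≤ S t) (hI : ∀ t j, 0 ≤ I t j) (hφ : ∀ t, 0 ≤ φ (I t)) {Sinf : ℝ}
    (hSinf : Tendsto S atTop (𝓝 Sinf)) {w : Fin (m + 1) → ℝ}
    (hw : ∀ t, ∑ j, w j * I t j ≤ φ (I t)) :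
    Sinf * ∑ j, w j * ((∑ k ∈ Iic j, I 0 k + (S 0 - Sinf)) / γ j) ≤ S 0 - Sinf := by
  have hinc t : 0 ≤ φ (I t) * S t := mul_nonneg (hφ t) (hS t)
  have hD := h.hasSum_incidence hS hφ hSinf
  have hstage j : HasSum (fun t => I t j) ((∑ k ∈ Iic j, I 0 k + (S 0 - Sinf)) / γ j) := by
    simpa [mul_div_cancel_left₀ _ (hγ j).ne'] using
      (h.hasSum_outflow hγ hI hinc hD j).div_const (γ j)
  refine hasSum_le (fun t => ?_)
    ((hasSum_sum fun j _ => (hstage j).mul_left (w j)).mul_left Sinf) hD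
  calc Sinf * ∑ j, w j * I t j ≤ Sinf * φ (I t) :=
        mul_le_mul_of_nonneg_left (hw t) (ge_of_tendsto' hSinf hS)
    _ ≤ S t * φ (I t) := mul_le_mul_of_nonneg_right (h.limit_le hS hφ hSinf t) (hφ t)
    _ = φ (I t) * S t := mul_comm _ _

theorem limit_le_one_div (h : SPSystem γ φ S I) (hγ : ∀ j, 0 < γ j) (hS : ∀ t, 0 ≤ S t)
    (hI : ∀ t j, 0 ≤ I t j) (hφ : ∀ t, 0 ≤ φ (I t)) (hF : ∀ t, 0 < ∑ j, I t j)
    (hdiff : DifferentiableAt ℝ φ 0) (hφ0 : φ 0 = 0)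
    (hr : ∀ j, 0 ≤ fderiv ℝ φ 0 (Pi.single j 1))
    (hrlast : 0 < fderiv ℝ φ 0 (Pi.single (Fin.last m) 1)) {Sinf : ℝ}
    (hSinf : Tendsto S atTop (𝓝 Sinf)) :
    Sinf ≤ 1 / ∑ j, fderiv ℝ φ 0 (Pi.single j 1) / γ j := by
  set r := fun j => fderiv ℝ φ 0 (Pi.single j 1)
  set δ := ∑ j, r j / γ j
  set G := ∑ j, 1 / γ j
  set c := r (Fin.last m) / γ (Fin.last m)
  have hc : 0 < c := div_pos hrlast (hγ _)
  have hcδ : c ≤ δ := single_le_sum (f := fun j => r j / γ j)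
    (fun j _ => div_nonneg (hr j) (hγ j).le) (mem_univ _)
  have hG : 0 < G := sum_pos (fun j _ => one_div_pos.2 (hγ j)) univ_nonempty
  by_contra! hlt
  have hSinf0 : 0 < Sinf := (one_div_pos.2 (hc.trans_le hcδ)).trans hlt
  have hgap : 1 / Sinf < δ := by
    rwa [one_div_lt hSinf0 (hc.trans_le hcδ)]
  -- `ε * G` must stay below both the gap `δ - 1 / Sinf` and the last-stage weight `c`.
  set ε := min (δ - 1 / Sinf) (c / 2) / G
  have hε : 0 < ε := div_pos (lt_min (by linarith) (by linarith)) hG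
  have hεG : ε * G = min (δ - 1 / Sinf) (c / 2) := div_mul_cancel₀ _ hG.ne'
  have hinc t : 0 ≤ φ (I t) * S t := mul_nonneg (hφ t) (hS t)
  obtain ⟨T, hT⟩ := eventually_atTop.1 ((h.tendsto_infected_zero hγ hI hinc
    (h.hasSum_incidence hS hφ hSinf)).eventually (eventually_sum_sub_mul_le hdiff hφ0 hε))
  have hle := (h.shift T).limit_mul_sum_le_of_le_incidence hγ (fun t => hS _) (fun t => hI _)
    (fun t => hφ _) (hSinf.comp (tendsto_add_atTop_nat T))
    (fun t => hT _ (Nat.le_add_left T t) (hI _))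
  have hge := le_sum_sub_mul_add_div (A := fun j => ∑ k ∈ Iic j, I T k) (D := S T - Sinf)
    (Fin.last m) hr hγ (fun j => sum_nonneg fun k _ => hI T k)
    (fun j => sum_le_univ_sum_of_nonneg fun k => hI T k) (by rw [← Fin.top_eq_last, Iic_top]) hε.le
  simp only [zero_add] at hle
  have hD : 0 ≤ S T - Sinf := sub_nonneg.2 (h.limit_le hS hφ hSinf T)
  have hsuper : 1 ≤ Sinf * (δ - ε * G) := by
    rw [← div_le_iff₀' hSinf0, hεG]
    linarith [min_le_left (δ - 1 / Sinf) (c / 2)]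
  have hlast : 0 < Sinf * ((c - ε * G) * ∑ j, I T j) :=
    mul_pos hSinf0 (mul_pos (by linarith [min_le_right (δ - 1 / Sinf) (c / 2)]) (hF T))
  linarith [mul_le_mul_of_nonneg_left hge hSinf0.le, mul_le_mul_of_nonneg_right hsuper hD]

end SPSystem

theorem sp_final_size_upper_bound_general
    (n : ℕ) (N : ℝ) (hN : 0 < N)
    (γ : Fin n → ℝ) (hγ : ∀ j, γ j ∈ Set.Ioo (0 : ℝ) 1)
    (φ : (Fin n → ℝ) → ℝ) (hφ : HypH n N φ)
    (S : ℕ → ℝ) (I : ℕ → Fin n → ℝ)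
    (hsys : SPSystem γ φ S I) (hic : AdmissibleIC N S I)
    (Sinf : ℝ) (hSinf : Filter.Tendsto S Filter.atTop (nhds Sinf))
    (δ : ℝ) (hδ : δ = ∑ j, fderiv ℝ φ 0 (Pi.single j 1) / γ j) :
    Sinf ≤ 1 / δ := by
  obtain ⟨j₀, hj₀⟩ := Function.ne_iff.1 hic.2.2.1
  obtain ⟨m, rfl⟩ := Nat.exists_eq_add_one_of_ne_zero j₀.pos.ne'
  obtain ⟨hC2, hφ0, hφval, hgrad, hlast, -⟩ := hφ
  have hinv := hsys.forward_invariant (fun j => (hγ j).1.le) (fun j => (hγ j).2.le) hφval hic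
  have hS t : 0 ≤ S t := (hinv t).1.le
  have hI t : ∀ j, 0 ≤ I t j := (hinv t).2.1
  have hφI t : 0 ≤ φ (I t) := (hφval _ ⟨hI t, by linarith [hinv t]⟩).1
  have hj₀pos := hsys.infected_pos (fun j => (hγ j).2) (fun t => mul_nonneg (hφI t) (hS t))
    (fun t i => mul_nonneg (hγ i).1.le (hI t i)) ((hic.2.1 j₀).lt_of_ne' hj₀)
  subst hδ
  exact hsys.limit_le_one_div (fun j => (hγ j).1) hS hI hφI
    (fun t => sum_pos' (fun j _ => hI t j) ⟨j₀, mem_univ _, hj₀pos t⟩)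
    (hC2.differentiable (by norm_num) 0) hφ0 (hgrad 0 ⟨fun _ => le_rfl, by simpa using hN.le⟩)
    (hlast m.succ_pos) hSinf

/-- final size upper bound: if `R₀ = Nδ > 1`, where
`δ = ∑ⱼ rⱼ/γⱼ` and `r = ∇φ(0)`, then `S∞ ≤ N/R₀ = 1/δ`. -/
theorem sp_final_size_upper_bound
    (n : ℕ) (hn : 0 < n) (N : ℝ) (hN : 0 < N)
    (γ : Fin n → ℝ) (hγ : ∀ j, γ j ∈ Set.Ioo (0 : ℝ) 1)
    (φ : (Fin n → ℝ) → ℝ) (hφ : HypH n N φ)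
    (S : ℕ → ℝ) (I : ℕ → Fin n → ℝ)
    (hsys : SPSystem γ φ S I) (hic : AdmissibleIC N S I)
    (Sinf : ℝ) (hSinf : Filter.Tendsto S Filter.atTop (nhds Sinf))
    (δ : ℝ) (hδ : δ = ∑ j, fderiv ℝ φ 0 (Pi.single j 1) / γ j)
    (hR0 : 1 < N * δ) :
    Sinf ≤ 1 / δ :=
  sp_final_size_upper_bound_general n N hN γ hγ φ hφ S I hsys hic Sinf hSinf δ hδ
end

section
/- (Uniqueness for the final size function.) Let g(x) = log(S(0)/x) − K + δx where δ > 0, S(0) > 0, and K := ∑_{j=1}^n (βⱼ/γⱼ)(S(0) + ∑_{i=1}^j Iᵢ(0)) > δS(0) (which holds whenever some Iᵢ(0) > 0). Then g has exactly one zero in (0, S(0)), and this zero lies in (0, 1/δ). -/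
/-! `g` is continuous on `(0, ∞)`, decreasing up to its minimum at `1/δ` and increasing after it,
by `1 - 1/t < log t < t - 1`. Since `g(S(0)) = δS(0) - K < 0`, a zero in `(0, S(0))` cannot lie
beyond `1/δ`, where `g` increases towards `g(S(0))`, and two zeros below `1/δ` would contradict
strict decrease there. A zero exists by the intermediate value theorem on `[S(0)e^{-K}, S(0)]`,
since `g(S(0)e^{-K}) = δS(0)e^{-K} > 0`. -/

open Real Set

noncomputable def finalSizeFun (S0 K δ x : ℝ) : ℝ := log (S0 / x) - K + δ * x

namespace finalSizeFun

variable {S0 K δ : ℝ}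

theorem strictAntiOn (hS0 : S0 ≠ 0) : StrictAntiOn (finalSizeFun S0 K δ) (Ioc 0 δ⁻¹) := by
  rintro a ⟨ha, -⟩ b ⟨hb, hbδ⟩ hab
  have hδb : δ * b ≤ 1 := by
    have hδ : 0 < δ := inv_pos.mp (hb.trans_le hbδ)
    exact (le_inv_mul_iff₀ hδ).mp (by rwa [mul_one])
  have hlog : log (a / b) < a / b - 1 := log_lt_sub_one_of_pos (by positivity) (by
    rw [Ne, div_eq_one_iff_eq hb.ne']; exact hab.ne)
  have hslope : a / b - 1 ≤ δ * (a - b) := by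
    rw [div_sub_one hb.ne', div_le_iff₀ hb]; nlinarith
  rw [log_div ha.ne' hb.ne'] at hlog
  simp only [finalSizeFun, log_div hS0 ha.ne', log_div hS0 hb.ne']
  linarith

theorem strictMonoOn (hS0 : S0 ≠ 0) (hδ : 0 < δ) : StrictMonoOn (finalSizeFun S0 K δ) (Ici δ⁻¹) := by
  rintro a (haδ : δ⁻¹ ≤ a) b (hbδ : δ⁻¹ ≤ b) hab
  have ha : 0 < a := (inv_pos.mpr hδ).trans_le haδ
  have hb : 0 < b := ha.trans hab
  have hδa : 1 ≤ δ * a := (inv_le_iff_one_le_mul₀' hδ).mp haδ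
  have hlog : log (b / a) < b / a - 1 := log_lt_sub_one_of_pos (by positivity) (by
    rw [Ne, div_eq_one_iff_eq ha.ne']; exact hab.ne')
  have hslope : b / a - 1 ≤ δ * (b - a) := by
    rw [div_sub_one ha.ne', div_le_iff₀ ha]; nlinarith
  rw [log_div hb.ne' ha.ne'] at hlog
  simp only [finalSizeFun, log_div hS0 ha.ne', log_div hS0 hb.ne']
  linarith

theorem continuousOn (hS0 : S0 ≠ 0) : ContinuousOn (finalSizeFun S0 K δ) (Ioi 0) := by
  have hdiv : ContinuousOn (fun x : ℝ => S0 / x) (Ioi 0) :=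
    continuousOn_const.div continuousOn_id fun x hx => ne_of_gt hx
  exact ((hdiv.log fun x hx => div_ne_zero hS0 (ne_of_gt hx)).sub continuousOn_const).add
    (continuousOn_const.mul continuousOn_id)

theorem apply_self (hS0 : S0 ≠ 0) : finalSizeFun S0 K δ S0 = δ * S0 - K := by
  simp only [finalSizeFun, div_self hS0, log_one]; ring

theorem apply_mul_exp_neg (hS0 : S0 ≠ 0) :
    finalSizeFun S0 K δ (S0 * exp (-K)) = δ * (S0 * exp (-K)) := by
  simp only [finalSizeFun, div_mul_cancel_left₀ hS0, exp_neg, inv_inv, log_exp]; ring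

theorem exists_eq_zero (hS0 : 0 < S0) (hδ : 0 < δ) (hK : δ * S0 < K) :
    ∃ x ∈ Ioo 0 S0, finalSizeFun S0 K δ x = 0 := by
  have hx₀ : 0 < S0 * exp (-K) := by positivity
  have hx₀S0 : S0 * exp (-K) < S0 :=
    mul_lt_of_lt_one_right hS0 (exp_lt_one_iff.mpr (by nlinarith))
  have hcont : ContinuousOn (finalSizeFun S0 K δ) (Icc (S0 * exp (-K)) S0) :=
    (continuousOn hS0.ne').mono fun x hx => hx₀.trans_le hx.1
  have hsign : (0 : ℝ) ∈ Ioo (finalSizeFun S0 K δ S0) (finalSizeFun S0 K δ (S0 * exp (-K))) := by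
    rw [apply_self hS0.ne', apply_mul_exp_neg hS0.ne']
    exact ⟨by linarith, by positivity⟩
  obtain ⟨x, hx, hgx⟩ := intermediate_value_Ioo' hx₀S0.le hcont hsign
  exact ⟨x, ⟨hx₀.trans hx.1, hx.2⟩, hgx⟩

theorem lt_inv_of_eq_zero (hS0 : 0 < S0) (hδ : 0 < δ) (hK : δ * S0 < K) {x : ℝ}
    (hx : x ∈ Ioo 0 S0) (hgx : finalSizeFun S0 K δ x = 0) : x < δ⁻¹ := by
  by_contra! hxδ
  have := strictMonoOn (K := K) hS0.ne' hδ hxδ (hxδ.trans hx.2.le) hx.2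
  rw [hgx, apply_self hS0.ne'] at this
  linarith

end finalSizeFun

theorem final_size_function_unique_zero_general
    (S0 δ K : ℝ) (hS0 : 0 < S0)
    (hδpos : 0 < δ)
    (hKδ : δ * S0 < K) :
    (∃! x : ℝ, x ∈ Set.Ioo 0 S0 ∧ Real.log (S0 / x) - K + δ * x = 0) ∧
    (∀ x ∈ Set.Ioo (0 : ℝ) S0, Real.log (S0 / x) - K + δ * x = 0 → x < 1 / δ) := by
  change (∃! x, x ∈ Ioo 0 S0 ∧ finalSizeFun S0 K δ x = 0) ∧
    ∀ x ∈ Ioo 0 S0, finalSizeFun S0 K δ x = 0 → x < 1 / δ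
  have hlt : ∀ x ∈ Ioo 0 S0, finalSizeFun S0 K δ x = 0 → x < δ⁻¹ :=
    fun _ hx => finalSizeFun.lt_inv_of_eq_zero hS0 hδpos hKδ hx
  obtain ⟨x, hx, hgx⟩ := finalSizeFun.exists_eq_zero hS0 hδpos hKδ
  refine ⟨⟨x, ⟨hx, hgx⟩, fun y ⟨hy, hgy⟩ => ?_⟩, fun y hy hgy => one_div δ ▸ hlt y hy hgy⟩
  exact (finalSizeFun.strictAntiOn hS0.ne').injOn ⟨hy.1, (hlt y hy hgy).le⟩
    ⟨hx.1, (hlt x hx hgx).le⟩ (hgy.trans hgx.symm)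

/-- uniqueness for the final size function: let
`g(x) = log(S(0)/x) − K + δx` with `δ = ∑ⱼ βⱼ/γⱼ > 0`, `S(0) > 0`, and
`K = ∑ⱼ (βⱼ/γⱼ)(S(0) + ∑_{i≤j} Iᵢ(0)) > δ S(0)`. Then `g` has exactly one zero in
`(0, S(0))`, and this zero lies in `(0, 1/δ)`. -/
theorem final_size_function_unique_zero
    (n : ℕ) (hn : 0 < n) (S0 δ K : ℝ) (hS0 : 0 < S0)
    (γ β I0 : Fin n → ℝ) (hγ : ∀ j, γ j ∈ Set.Ioo (0 : ℝ) 1) (hβ : ∀ j, 0 ≤ β j)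
    (hδ : δ = ∑ j, β j / γ j) (hδpos : 0 < δ)
    (hK : K = ∑ j, (β j / γ j) * (S0 + ∑ i ∈ Finset.Iic j, I0 i))
    (hKδ : δ * S0 < K) :
    (∃! x : ℝ, x ∈ Set.Ioo 0 S0 ∧ Real.log (S0 / x) - K + δ * x = 0) ∧
    (∀ x ∈ Set.Ioo (0 : ℝ) S0, Real.log (S0 / x) - K + δ * x = 0 → x < 1 / δ) :=
  final_size_function_unique_zero_general S0 δ K hS0 hδpos hKδ
end

section
/- (Monotonicity propagation.) For the staged progression system, if at some time t₀ one has I(t₀+1) < I(t₀) componentwise (strictly in all components), then I(t+1) < I(t) componentwise for all t ≥ t₀. -/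
/-! The region `S ≥ 0, I ≥ 0, S + ∑ Iⱼ ≤ N` is invariant, since a step only removes the outflow
`γₙ Iₙ` of the last class from the total population. On it `φ` is monotone, its gradient being
nonnegative, and `S` is nonincreasing, so a componentwise decrease of `I` also decreases the
inflows `φ(I) S` into the first class and `γⱼ₋₁ Iⱼ₋₁` into the later ones; together with the
retained fraction `(1 - γⱼ) Iⱼ`, which decreases strictly, this carries the strict decrease of
every class one step forward. -/

open Filter Topology

open Set

theorem ContinuousLinearMap.map_nonneg_of_apply_single_nonneg {ι : Type*} [Fintype ι]
    [DecidableEq ι] (f : (ι → ℝ) →L[ℝ] ℝ) (hf : ∀ i, 0 ≤ f (Pi.single i 1)) {x : ι → ℝ}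
    (hx : 0 ≤ x) : 0 ≤ f x := by
  rw [← Finset.univ_sum_single x, map_sum]
  refine Finset.sum_nonneg fun i _ => ?_
  rw [← mul_one (x i), ← smul_eq_mul, Pi.single_smul', map_smul, smul_eq_mul]
  exact mul_nonneg (hx i) (hf i)

theorem Convex.monotoneOn_of_fderiv_nonneg {E : Type*} [NormedAddCommGroup E]
    [NormedSpace ℝ E] [PartialOrder E] [IsOrderedAddMonoid E] {s : Set E} (hs : Convex ℝ s)
    {f : E → ℝ} (hf : ∀ x ∈ s, DifferentiableAt ℝ f x)
    (hf' : ∀ x ∈ s, ∀ d, 0 ≤ d → 0 ≤ fderiv ℝ f x d) : MonotoneOn f s := by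
  intro x hx y hy hxy
  obtain ⟨z, hz, hfz⟩ :=
    domain_mvt (fun z hz => (hf z hz).hasFDerivAt.hasFDerivWithinAt) hs hx hy
  have := hf' z (hs.segment_subset hx hy hz) (y - x) (sub_nonneg.2 hxy)
  linarith

theorem convex_stateSet (n : ℕ) (N : ℝ) : Convex ℝ (stateSet n N) := by
  refine (convex_Ici (0 : Fin n → ℝ)).inter ?_
  exact convex_halfSpace_le (f := fun I : Fin n → ℝ => ∑ j, I j)
    ⟨fun x y => Finset.sum_add_distrib, fun c x => (Finset.mul_sum ..).symm⟩ N

theorem HypH.monotoneOn {n : ℕ} {N : ℝ} {φ : (Fin n → ℝ) → ℝ} (hφ : HypH n N φ) :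
    MonotoneOn φ (stateSet n N) :=
  (convex_stateSet n N).monotoneOn_of_fderiv_nonneg
    (fun x _ => (hφ.1.differentiable (by norm_num)) x)
    fun x hx _ hd => (fderiv ℝ φ x).map_nonneg_of_apply_single_nonneg (hφ.2.2.2.1 x hx) hd

def IsFeasible {n : ℕ} (N s : ℝ) (i : Fin n → ℝ) : Prop :=
  0 ≤ s ∧ 0 ≤ i ∧ s + ∑ j, i j ≤ N

theorem IsFeasible.mem_stateSet {n : ℕ} {N s : ℝ} {i : Fin n → ℝ} (h : IsFeasible N s i) :
    i ∈ stateSet n N :=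
  ⟨h.2.1, by linarith [h.1, h.2.2]⟩

namespace SPSystem

variable {m : ℕ} {N : ℝ} {γ : Fin (m + 1) → ℝ} {φ : (Fin (m + 1) → ℝ) → ℝ} {S : ℕ → ℝ}
  {I : ℕ → Fin (m + 1) → ℝ}

theorem S_succ (hsys : SPSystem γ φ S I) (t : ℕ) : S (t + 1) = (1 - φ (I t)) * S t :=
  hsys.1 t

theorem I_succ_zero (hsys : SPSystem γ φ S I) (t : ℕ) :
    I (t + 1) 0 = (1 - γ 0) * I t 0 + φ (I t) * S t :=
  hsys.2.1 t m.succ_pos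

theorem I_succ_succ (hsys : SPSystem γ φ S I) (t : ℕ) (j : Fin m) :
    I (t + 1) j.succ = (1 - γ j.succ) * I t j.succ + γ j.castSucc * I t j.castSucc :=
  hsys.2.2 t j.castSucc (by simp)

theorem sum_I_succ (hsys : SPSystem γ φ S I) (t : ℕ) :
    ∑ j, I (t + 1) j = ∑ j, I t j + φ (I t) * S t - γ (Fin.last m) * I t (Fin.last m) := by
  have hout := Fin.sum_univ_succ fun j => γ j * I t j
  have hin := Fin.sum_univ_castSucc fun j => γ j * I t j
  rw [Fin.sum_univ_succ, Fin.sum_univ_succ (I t), hsys.I_succ_zero,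
    Finset.sum_congr rfl fun j _ => hsys.I_succ_succ t j]
  simp only [sub_mul, one_mul, Finset.sum_add_distrib, Finset.sum_sub_distrib]
  linarith

theorem isFeasible_succ (hsys : SPSystem γ φ S I) (hγ : ∀ j, γ j ∈ Icc 0 1)
    (hφ : MapsTo φ (stateSet (m + 1) N) (Icc 0 1)) {t : ℕ} (ht : IsFeasible N (S t) (I t)) :
    IsFeasible N (S (t + 1)) (I (t + 1)) := by
  obtain ⟨hφ₀, hφ₁⟩ := hφ ht.mem_stateSet
  obtain ⟨hS, hI, hsum⟩ := ht
  refine ⟨?_, fun j => ?_, ?_⟩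
  · rw [hsys.S_succ]
    exact mul_nonneg (sub_nonneg.2 hφ₁) hS
  · cases j using Fin.cases with
    | zero =>
      rw [hsys.I_succ_zero]
      exact add_nonneg (mul_nonneg (sub_nonneg.2 (hγ 0).2) (hI 0)) (mul_nonneg hφ₀ hS)
    | succ j =>
      rw [hsys.I_succ_succ]
      exact add_nonneg (mul_nonneg (sub_nonneg.2 (hγ _).2) (hI _)) (mul_nonneg (hγ _).1 (hI _))
  · rw [hsys.S_succ, hsys.sum_I_succ]
    nlinarith [mul_nonneg (hγ (Fin.last m)).1 (hI (Fin.last m))]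

theorem isFeasible (hsys : SPSystem γ φ S I) (hγ : ∀ j, γ j ∈ Icc 0 1)
    (hφ : MapsTo φ (stateSet (m + 1) N) (Icc 0 1)) (h₀ : IsFeasible N (S 0) (I 0)) (t : ℕ) :
    IsFeasible N (S t) (I t) := by
  induction t with
  | zero => exact h₀
  | succ t ih => exact hsys.isFeasible_succ hγ hφ ih

theorem incidence_succ_le (hsys : SPSystem γ φ S I)
    (hφ : MonotoneOn φ (stateSet (m + 1) N)) (hφ₀ : ∀ i ∈ stateSet (m + 1) N, 0 ≤ φ i)
    {t : ℕ} (ht : IsFeasible N (S t) (I t)) (ht' : IsFeasible N (S (t + 1)) (I (t + 1)))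
    (hle : I (t + 1) ≤ I t) : φ (I (t + 1)) * S (t + 1) ≤ φ (I t) * S t := by
  have hφt := hφ₀ _ ht.mem_stateSet
  have hS : S (t + 1) ≤ S t := by
    rw [hsys.S_succ]
    nlinarith [mul_nonneg hφt ht.1]
  exact mul_le_mul (hφ ht'.mem_stateSet ht.mem_stateSet hle) hS ht'.1 hφt

theorem I_succ_lt_of_lt (hsys : SPSystem γ φ S I) (hγ : ∀ j, γ j ∈ Ico 0 1) {t : ℕ}
    (hinc : φ (I (t + 1)) * S (t + 1) ≤ φ (I t) * S t) (hlt : ∀ j, I (t + 1) j < I t j) :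
    ∀ j, I (t + 1 + 1) j < I (t + 1) j := by
  intro j
  cases j using Fin.cases with
  | zero =>
    have h₁ := hsys.I_succ_zero (t + 1)
    have h₀ := hsys.I_succ_zero t
    have := mul_lt_mul_of_pos_left (hlt 0) (sub_pos.2 (hγ 0).2)
    linarith
  | succ j =>
    have h₁ := hsys.I_succ_succ (t + 1) j
    have h₀ := hsys.I_succ_succ t j
    have := mul_lt_mul_of_pos_left (hlt j.succ) (sub_pos.2 (hγ j.succ).2)
    have := mul_le_mul_of_nonneg_left (hlt j.castSucc).le (hγ j.castSucc).1
    linarith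

end SPSystem

theorem sp_monotonicity_propagation_general
    (n : ℕ) (N : ℝ)
    (γ : Fin n → ℝ) (hγ : ∀ j, γ j ∈ Set.Ioo (0 : ℝ) 1)
    (φ : (Fin n → ℝ) → ℝ) (hφ : HypH n N φ)
    (S : ℕ → ℝ) (I : ℕ → Fin n → ℝ)
    (hsys : SPSystem γ φ S I) (hic : AdmissibleIC N S I)
    (t₀ : ℕ) (hdec : ∀ j : Fin n, I (t₀ + 1) j < I t₀ j) :
    ∀ t ≥ t₀, ∀ j : Fin n, I (t + 1) j < I t j := by
  cases n with
  | zero => exact fun _ _ j => j.elim0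
  | succ m =>
    have hφ₀ : ∀ i ∈ stateSet (m + 1) N, 0 ≤ φ i := fun i hi => (hφ.2.2.1 i hi).1
    have hfeas := hsys.isFeasible (fun j => Ioo_subset_Icc_self (hγ j))
      (fun i hi => ⟨hφ₀ i hi, (hφ.2.2.1 i hi).2.le⟩) ⟨hic.1.le, hic.2.1, hic.2.2.2⟩
    intro t ht
    induction t, ht using Nat.le_induction with
    | base => exact hdec
    | succ t _ ih =>
      exact hsys.I_succ_lt_of_lt (fun j => Ioo_subset_Ico_self (hγ j))
        (hsys.incidence_succ_le hφ.monotoneOn hφ₀ (hfeas t) (hfeas (t + 1)) fun j => (ih j).le) ih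

/-- monotonicity propagation: if at some time `t₀` every infected class
strictly decreases, i.e. `I(t₀+1) < I(t₀)` componentwise, then `I(t+1) < I(t)`
componentwise for all `t ≥ t₀`. -/
theorem sp_monotonicity_propagation
    (n : ℕ) (hn : 0 < n) (N : ℝ) (hN : 0 < N)
    (γ : Fin n → ℝ) (hγ : ∀ j, γ j ∈ Set.Ioo (0 : ℝ) 1)
    (φ : (Fin n → ℝ) → ℝ) (hφ : HypH n N φ)
    (S : ℕ → ℝ) (I : ℕ → Fin n → ℝ)
    (hsys : SPSystem γ φ S I) (hic : AdmissibleIC N S I)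
    (t₀ : ℕ) (hdec : ∀ j : Fin n, I (t₀ + 1) j < I t₀ j) :
    ∀ t ≥ t₀, ∀ j : Fin n, I (t + 1) j < I t j :=
  sp_monotonicity_propagation_general n N γ hγ φ hφ S I hsys hic t₀ hdec
end
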